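/- Let U*, V* ∈ ℝ^{n×r} have orthonormal columns, let U, V ∈ ℝ^{n×r} be arbitrary, and let G ∈ ℝ^{r×r} be an orthogonal matrix. Set F* = [U*; V*] ∈ ℝ^{2n×r} and F = [U; V] ∈ ℝ^{2n×r}. Then ‖(U*)ᵀU − (V*)ᵀV‖₂ ≤ 2·‖F − F*G‖₂. -/

import Mathlib

/-!
Because `U*ᵀ U* = 1`, we have `U*ᵀ U − V*ᵀ V = U*ᵀ (U − U* G) − V*ᵀ (V − V* G)`.
Multiplying on the left by the adjoint of a matrix with orthonormal columns does not increase
the spectral norm, and each block of `F − F* G = [U − U* G; V − V* G]` has spectral norm at most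
that of the whole; the triangle inequality then gives the factor `2`.
-/

open Matrix MeasureTheory
open scoped Classical

noncomputable section

/-- Euclidean norm of a finitely-indexed real vector. -/
def vecNorm {n : Type*} [Fintype n] (v : n → ℝ) : ℝ :=
  Real.sqrt (∑ j, (v j) ^ 2)

/-- Spectral norm (ℓ₂ operator norm) of a real matrix. -/
def specNorm {m n : Type*} [Fintype m] [Fintype n] (A : Matrix m n ℝ) : ℝ :=
  sSup {c : ℝ | ∃ x : n → ℝ, vecNorm x ≤ 1 ∧ c = vecNorm (A.mulVec x)}

/-- Frobenius norm of a real matrix. -/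
def frobNorm {m n : Type*} [Fintype m] [Fintype n] (A : Matrix m n ℝ) : ℝ :=
  Real.sqrt (∑ i, ∑ j, (A i j) ^ 2)

/-- Entrywise maximum norm ‖·‖_∞ of a real matrix. -/
def maxNorm {m n : Type*} [Fintype m] [Fintype n] (A : Matrix m n ℝ) : ℝ :=
  ⨆ i, ⨆ j, |A i j|

/-- Two-to-infinity norm ‖·‖_{2,∞}: maximum Euclidean norm of a row. -/
def twoInfNorm {m n : Type*} [Fintype m] [Fintype n] (A : Matrix m n ℝ) : ℝ :=
  ⨆ i, vecNorm (fun j => A i j)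

lemma vecNorm_eq_norm_toLp {n : Type*} [Fintype n] (v : n → ℝ) :
    vecNorm v = ‖WithLp.toLp 2 v‖ := by
  simp only [vecNorm, EuclideanSpace.norm_eq, Real.norm_eq_abs, sq_abs]

namespace Matrix

open scoped Matrix.Norms.L2Operator

lemma specNorm_eq_l2_opNorm {m n : Type*} [Fintype m] [Fintype n] (A : Matrix m n ℝ) :
    specNorm A = ‖A‖ := by
  rw [l2_opNorm_def, ← ContinuousLinearMap.sSup_unitClosedBall_eq_norm, specNorm]
  congr 1
  ext c
  constructor
  · rintro ⟨x, hx, rfl⟩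
    refine ⟨WithLp.toLp 2 x, ?_, ?_⟩
    · rwa [mem_closedBall_zero_iff, ← vecNorm_eq_norm_toLp]
    · exact (vecNorm_eq_norm_toLp _).symm
  · rintro ⟨x, hx, rfl⟩
    refine ⟨x.ofLp, ?_, ?_⟩
    · rwa [vecNorm_eq_norm_toLp, WithLp.toLp_ofLp, ← mem_closedBall_zero_iff]
    · exact (vecNorm_eq_norm_toLp _).symm

variable {𝕜 : Type*} [RCLike 𝕜] {l m n : Type*} [Fintype l] [Fintype m] [Fintype n]

lemma l2_opNorm_one_le [DecidableEq n] : ‖(1 : Matrix n n 𝕜)‖ ≤ 1 := by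
  rw [← diagonal_one, l2_opNorm_diagonal]
  exact (pi_norm_le_iff_of_nonneg zero_le_one).2 fun _ => norm_one.le

lemma l2_opNorm_le_one_of_conjTranspose_mul_self_eq_one [DecidableEq n] {A : Matrix m n 𝕜}
    (hA : Aᴴ * A = 1) : ‖A‖ ≤ 1 := by
  have h : ‖A‖ * ‖A‖ ≤ 1 := by
    rw [← l2_opNorm_conjTranspose_mul_self, hA]
    exact l2_opNorm_one_le
  nlinarith [norm_nonneg A]

lemma l2_opNorm_conjTranspose_mul_le [DecidableEq n] {A : Matrix m n 𝕜} (hA : Aᴴ * A = 1)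
    (B : Matrix m l 𝕜) : ‖Aᴴ * B‖ ≤ ‖B‖ := by
  classical
  calc ‖Aᴴ * B‖ ≤ ‖Aᴴ‖ * ‖B‖ := l2_opNorm_mul _ _
    _ ≤ 1 * ‖B‖ := by
      rw [l2_opNorm_conjTranspose]
      gcongr
      exact l2_opNorm_le_one_of_conjTranspose_mul_self_eq_one hA
    _ = ‖B‖ := one_mul _

lemma l2_opNorm_le_l2_opNorm_fromRows_left (A : Matrix m n 𝕜) (B : Matrix l n 𝕜) :
    ‖A‖ ≤ ‖fromRows A B‖ := by
  classical
  set P : Matrix (m ⊕ l) m 𝕜 := fromRows 1 0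
  have hP : Pᴴ * P = 1 := by
    simp [P, conjTranspose_fromRows_eq_fromCols_conjTranspose, fromCols_mul_fromRows]
  have hPA : Pᴴ * fromRows A B = A := by
    simp [P, conjTranspose_fromRows_eq_fromCols_conjTranspose, fromCols_mul_fromRows]
  simpa only [hPA] using l2_opNorm_conjTranspose_mul_le hP (fromRows A B)

lemma l2_opNorm_le_l2_opNorm_fromRows_right (A : Matrix m n 𝕜) (B : Matrix l n 𝕜) :
    ‖B‖ ≤ ‖fromRows A B‖ := by
  classical
  set P : Matrix (m ⊕ l) l 𝕜 := fromRows 0 1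
  have hP : Pᴴ * P = 1 := by
    simp [P, conjTranspose_fromRows_eq_fromCols_conjTranspose, fromCols_mul_fromRows]
  have hPB : Pᴴ * fromRows A B = B := by
    simp [P, conjTranspose_fromRows_eq_fromCols_conjTranspose, fromCols_mul_fromRows]
  simpa only [hPB] using l2_opNorm_conjTranspose_mul_le hP (fromRows A B)

end Matrix

open scoped Matrix.Norms.L2Operator

theorem stmt17_general {n r : ℕ} (Ustar Vstar U V : Matrix (Fin n) (Fin r) ℝ)
    (hU : Ustarᵀ * Ustar = 1) (hV : Vstarᵀ * Vstar = 1)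
    (G : Matrix (Fin r) (Fin r) ℝ) :
    specNorm (Ustarᵀ * U - Vstarᵀ * V) ≤
      2 * specNorm (Matrix.fromRows U V - Matrix.fromRows Ustar Vstar * G) := by
  simp only [← conjTranspose_eq_transpose_of_trivial] at hU hV ⊢
  rw [specNorm_eq_l2_opNorm, specNorm_eq_l2_opNorm]
  have hsplit : Ustarᴴ * U - Vstarᴴ * V
      = Ustarᴴ * (U - Ustar * G) - Vstarᴴ * (V - Vstar * G) := by
    rw [Matrix.mul_sub, Matrix.mul_sub, ← Matrix.mul_assoc, ← Matrix.mul_assoc, hU, hV]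
    abel
  have hblocks : fromRows U V - fromRows Ustar Vstar * G
      = fromRows (U - Ustar * G) (V - Vstar * G) := by
    rw [fromRows_mul]
    ext (i | i) j <;> simp
  calc ‖Ustarᴴ * U - Vstarᴴ * V‖
      ≤ ‖Ustarᴴ * (U - Ustar * G)‖ + ‖Vstarᴴ * (V - Vstar * G)‖ := hsplit ▸ norm_sub_le _ _
    _ ≤ ‖U - Ustar * G‖ + ‖V - Vstar * G‖ :=
      add_le_add (l2_opNorm_conjTranspose_mul_le hU _) (l2_opNorm_conjTranspose_mul_le hV _)
    _ ≤ 2 * ‖fromRows U V - fromRows Ustar Vstar * G‖ := by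
      rw [hblocks, two_mul]
      exact add_le_add (l2_opNorm_le_l2_opNorm_fromRows_left _ _)
        (l2_opNorm_le_l2_opNorm_fromRows_right _ _)

/-- `‖(U*)ᵀU − (V*)ᵀV‖₂ ≤ 2·‖F − F*G‖₂` for `F = [U; V]`, `F* = [U*; V*]`
with `U*, V*` having orthonormal columns and `G` orthogonal. -/
theorem stmt17 {n r : ℕ} (Ustar Vstar U V : Matrix (Fin n) (Fin r) ℝ)
    (hU : Ustarᵀ * Ustar = 1) (hV : Vstarᵀ * Vstar = 1)
    (G : Matrix (Fin r) (Fin r) ℝ) (hG : Gᵀ * G = 1) :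
    specNorm (Ustarᵀ * U - Vstarᵀ * V) ≤
      2 * specNorm (Matrix.fromRows U V - Matrix.fromRows Ustar Vstar * G) :=
  stmt17_general Ustar Vstar U V hU hV G
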